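/- Let n ≥ 1, A ∈ ℂ^{n×n}, r ≥ 0 a real number, and let 0 < τ₁ ≤ τ₂ ≤ 1 be real. Suppose every z ∈ W_{≥r}(τ₂·A) satisfies Re z > 0, and suppose W_{≥r}(τ₁·A) is nonempty. Then, using the principal argument arg : ℂ \ {0} → (−π, π], one has sup{ arg z : z ∈ W_{≥r}(τ₁·A) } ≤ sup{ arg z : z ∈ W_{≥r}(τ₂·A) } and inf{ arg z : z ∈ W_{≥r}(τ₁·A) } ≥ inf{ arg z : z ∈ W_{≥r}(τ₂·A) }. -/

import Mathlib

open scoped ComplexOrder Matrix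

noncomputable section

/-- The vertically projected Davis–Wielandt shell `W_{≥r}(A)`. -/
def wShell {n : ℕ} (A : Matrix (Fin n) (Fin n) ℂ) (r : ℝ) : Set ℂ :=
  { z | ∃ x : EuclideanSpace ℂ (Fin n), ‖x‖ = 1 ∧ r ≤ ‖Matrix.toEuclideanLin A x‖ ∧
      z = (inner ℂ x (Matrix.toEuclideanLin A x) : ℂ) }

/-! Scaling `A` by `c ≥ 1` scales every point of the shell by `c`, which keeps its argument,
and can only enlarge the set of unit vectors meeting the constraint `‖A x‖ ≥ r`. Hence the
arguments of `W_{≥r}(τ₁ A)` are among those of `W_{≥r}(τ₂ A)`; as all arguments lie in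
`(-π, π]`, the supremum can only grow and the infimum only shrink. -/

lemma ofReal_mul_mem_wShell_smul {n : ℕ} {A : Matrix (Fin n) (Fin n) ℂ} {r c : ℝ} {z : ℂ}
    (hz : z ∈ wShell A r) (hc : 1 ≤ c) : (c : ℂ) * z ∈ wShell ((c : ℂ) • A) r := by
  obtain ⟨x, hx, hrx, rfl⟩ := hz
  have hAx : Matrix.toEuclideanLin ((c : ℂ) • A) x = (c : ℂ) • Matrix.toEuclideanLin A x := by
    rw [map_smul, LinearMap.smul_apply]
  refine ⟨x, hx, ?_, by rw [hAx, inner_smul_right]⟩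
  calc r ≤ ‖Matrix.toEuclideanLin A x‖ := hrx
    _ ≤ c * ‖Matrix.toEuclideanLin A x‖ := le_mul_of_one_le_left (norm_nonneg _) hc
    _ = ‖Matrix.toEuclideanLin ((c : ℂ) • A) x‖ := by
      rw [hAx, norm_smul, Complex.norm_real, Real.norm_of_nonneg (by linarith)]

lemma arg_image_wShell_smul_subset {n : ℕ} (A : Matrix (Fin n) (Fin n) ℂ) (r : ℝ) {s t : ℝ}
    (hs : 0 < s) (hst : s ≤ t) :
    Complex.arg '' wShell ((s : ℂ) • A) r ⊆ Complex.arg '' wShell ((t : ℂ) • A) r := by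
  rintro _ ⟨z, hz, rfl⟩
  have hscale : (((t / s : ℝ) : ℂ) • (s : ℂ) • A) = (t : ℂ) • A := by
    rw [smul_smul, ← Complex.ofReal_mul, div_mul_cancel₀ t hs.ne']
  refine ⟨((t / s : ℝ) : ℂ) * z, hscale ▸ ofReal_mul_mem_wShell_smul hz ?_, ?_⟩
  · rwa [one_le_div hs]
  · exact Complex.arg_real_mul z (div_pos (hs.trans_le hst) hs)

lemma bddAbove_image_arg (S : Set ℂ) : BddAbove (Complex.arg '' S) :=
  ⟨Real.pi, by rintro _ ⟨z, -, rfl⟩; exact Complex.arg_le_pi z⟩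

lemma bddBelow_image_arg (S : Set ℂ) : BddBelow (Complex.arg '' S) :=
  ⟨-Real.pi, by rintro _ ⟨z, -, rfl⟩; exact (Complex.neg_pi_lt_arg z).le⟩

theorem constrained_phase_monotone_in_tau_general {n : ℕ}
    (A : Matrix (Fin n) (Fin n) ℂ) (r : ℝ)
    (τ₁ τ₂ : ℝ) (hτ₁ : 0 < τ₁) (hτ₁₂ : τ₁ ≤ τ₂)
    (hne : (wShell ((τ₁ : ℂ) • A) r).Nonempty) :
    sSup (Complex.arg '' wShell ((τ₁ : ℂ) • A) r) ≤
        sSup (Complex.arg '' wShell ((τ₂ : ℂ) • A) r) ∧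
    sInf (Complex.arg '' wShell ((τ₂ : ℂ) • A) r) ≤
        sInf (Complex.arg '' wShell ((τ₁ : ℂ) • A) r) := by
  have hsub := arg_image_wShell_smul_subset A r hτ₁ hτ₁₂
  exact ⟨csSup_le_csSup (bddAbove_image_arg _) (hne.image _) hsub,
    csInf_le_csInf (bddBelow_image_arg _) (hne.image _) hsub⟩

/-- Paper's Proposition 2(b): for `τ ∈ (0, 1]`, the lower constrained phase of `τ·A` is
decreasing in `τ` and the upper constrained phase of `τ·A` is increasing in `τ`. -/
theorem constrained_phase_monotone_in_tau {n : ℕ} (hn : 1 ≤ n)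
    (A : Matrix (Fin n) (Fin n) ℂ) (r : ℝ) (hr : 0 ≤ r)
    (τ₁ τ₂ : ℝ) (hτ₁ : 0 < τ₁) (hτ₁₂ : τ₁ ≤ τ₂) (hτ₂ : τ₂ ≤ 1)
    (hre : ∀ z ∈ wShell ((τ₂ : ℂ) • A) r, 0 < z.re)
    (hne : (wShell ((τ₁ : ℂ) • A) r).Nonempty) :
    sSup (Complex.arg '' wShell ((τ₁ : ℂ) • A) r) ≤
        sSup (Complex.arg '' wShell ((τ₂ : ℂ) • A) r) ∧
    sInf (Complex.arg '' wShell ((τ₂ : ℂ) • A) r) ≤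
        sInf (Complex.arg '' wShell ((τ₁ : ℂ) • A) r) :=
  constrained_phase_monotone_in_tau_general A r τ₁ τ₂ hτ₁ hτ₁₂ hne
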